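/- Let (L,ρ) be an (R,A)-Lie algebra with enveloping algebra U(L), and let P be a right U(L)-module that is projective of constant rank 1 as an A-module. Then the functors P ⊗_A (−) and Hom_A(P, −) are mutually inverse equivalences between the category of left U(L)-modules and the category of right U(L)-modules, where P ⊗_A M carries the right action (p ⊗ m)·x = p·x ⊗ m − p ⊗ x·m and Hom_A(P,N) carries the left action (x·f)(p) = f(p·x) − f(p)·x. -/
import Mathlib

open scoped TensorProduct
structure LieRinehart (R A L : Type*) [CommRing R] [CommRing A] [Algebra R A]
    [LieRing L] [LieAlgebra R L] [Module A L] where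
  ρ : L →ₗ[A] Derivation R A A
  ρ_lie : ∀ x y : L, ρ ⁅x, y⁆ = ⁅ρ x, ρ y⁆
  leibniz : ∀ (a : A) (x y : L), ⁅x, a • y⁆ = a • ⁅x, y⁆ + (ρ x a) • y

/-- A left module structure over a Lie–Rinehart algebra on an `A`-module `M`. -/
structure IsLRLeftModule {R A L : Type*} [CommRing R] [CommRing A] [Algebra R A]
    [LieRing L] [LieAlgebra R L] [Module A L] (LR : LieRinehart R A L)
    (M : Type*) [AddCommGroup M] [Module A M] (σ : L → M → M) : Prop where
  add_m : ∀ (x : L) (m n : M), σ x (m + n) = σ x m + σ x n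
  add_x : ∀ (x y : L) (m : M), σ (x + y) m = σ x m + σ y m
  smul_x : ∀ (a : A) (x : L) (m : M), σ (a • x) m = a • σ x m
  leibniz : ∀ (x : L) (a : A) (m : M), σ x (a • m) = a • σ x m + (LR.ρ x a) • m
  lie : ∀ (x y : L) (m : M), σ ⁅x, y⁆ m = σ x (σ y m) - σ y (σ x m)

/-- A right module structure over a Lie–Rinehart algebra on an `A`-module `N`:
an action `τ` satisfying `n•(a•x) = a•(n•x) − ρ(x)(a)•n` and
`(a•n)•x = a•(n•x) − ρ(x)(a)•n`. -/
structure IsLRRightModule {R A L : Type*} [CommRing R] [CommRing A] [Algebra R A]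
    [LieRing L] [LieAlgebra R L] [Module A L] (LR : LieRinehart R A L)
    (N : Type*) [AddCommGroup N] [Module A N] (τ : N → L → N) : Prop where
  add_m : ∀ (m n : N) (x : L), τ (m + n) x = τ m x + τ n x
  add_x : ∀ (n : N) (x y : L), τ n (x + y) = τ n x + τ n y
  smul_x : ∀ (n : N) (a : A) (x : L), τ n (a • x) = a • τ n x - (LR.ρ x a) • n
  smul_m : ∀ (a : A) (n : N) (x : L), τ (a • n) x = a • τ n x - (LR.ρ x a) • n
  lie : ∀ (n : N) (x y : L), τ n ⁅x, y⁆ = τ (τ n x) y - τ (τ n y) x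

section Killer
variable (A P : Type*) [CommRing A] [AddCommGroup P] [Module A P]

/-- The trace ideal of a module: the ideal generated by all values of linear functionals. -/
def LRtraceIdeal : Ideal A := Ideal.span {a : A | ∃ (f : P →ₗ[A] A) (p : P), f p = a}

variable {A P}

theorem LR_exists_killer (hp : Module.Projective A P) (x : P) :
    ∃ d : A, d • x = 0 ∧ d - 1 ∈ LRtraceIdeal A P := by
  classical
  obtain ⟨s, hs⟩ := hp.out
  set J : Finset P := (s x).support with hJ
  set T : Matrix J J A := fun i j => s (i : P) (j : P) with hT
  set v : J → A := fun j => s x (j : P) with hv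
  -- the key linear-algebra relation : v = v T
  have hrel : ∀ j : J, s x (j : P) = ∑ i : J, s x (i : P) * s (i : P) (j : P) := by
    intro j
    conv_lhs => rw [show x = Finsupp.linearCombination A id (s x) from (hs x).symm]
    rw [Finsupp.linearCombination_apply, Finsupp.sum, map_sum, Finsupp.finset_sum_apply]
    rw [← Finset.sum_attach J (fun i => (s ((s x) i • id i)) (j : P))]
    refine Finset.sum_congr rfl fun i _ => ?_
    simp [mul_comm]
  have hvT : Matrix.vecMul v (1 - T) = 0 := by
    funext j
    show Matrix.vecMul v (1 - T) j = 0
    rw [Matrix.vecMul_sub, Matrix.vecMul_one]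
    simp only [Pi.sub_apply, Pi.zero_apply, sub_eq_zero]
    show v j = dotProduct v fun i => T i j
    simpa [dotProduct] using hrel j
  refine ⟨(1 - T).det, ?_, ?_⟩
  · -- d • x = 0
    have hdv : ∀ j : J, (1 - T).det * v j = 0 := by
      intro j
      have h2 : Matrix.vecMul (Matrix.vecMul v (1 - T)) (1 - T).adjugate = 0 := by
        rw [hvT]; funext i; simp [Matrix.vecMul, dotProduct]
      rw [Matrix.vecMul_vecMul, Matrix.mul_adjugate] at h2
      have h3 := congrFun h2 j
      simpa [Matrix.vecMul, dotProduct, Matrix.smul_apply, smul_eq_mul,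
        Matrix.one_apply, mul_ite, mul_one, mul_zero, Finset.sum_ite_eq', mul_comm] using h3
    conv_lhs => rw [show x = Finsupp.linearCombination A id (s x) from (hs x).symm]
    rw [Finsupp.linearCombination_apply, Finsupp.sum, Finset.smul_sum]
    rw [← Finset.sum_attach J (fun i => ((1 - T).det • ((s x) i • id i)))]
    refine Finset.sum_eq_zero fun i _ => ?_
    rw [smul_smul]
    rw [hdv i]
    simp
  · -- d - 1 ∈ trace ideal
    have hTmem : ∀ i j : J, s (i : P) (j : P) ∈ LRtraceIdeal A P := by
      intro i j
      refine Ideal.subset_span ⟨(Finsupp.lapply (j : P)).comp s, (i : P), rfl⟩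
    rw [← Ideal.Quotient.eq]
    have : (Ideal.Quotient.mk (LRtraceIdeal A P)) (1 - T).det
        = ((1 - T).map (Ideal.Quotient.mk (LRtraceIdeal A P))).det := by
      rw [RingHom.map_det]; rfl
    rw [this]
    have hmap : (1 - T).map (Ideal.Quotient.mk (LRtraceIdeal A P)) = 1 := by
      funext i j
      simp only [Matrix.map_apply, Matrix.sub_apply]
      by_cases h : i = j
      · subst h
        simp [hT, Matrix.one_apply, Ideal.Quotient.eq_zero_iff_mem.mpr (hTmem i i), sub_eq_self]
      · simp [hT, Matrix.one_apply, h, Ideal.Quotient.eq_zero_iff_mem.mpr (hTmem i j)]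
    rw [hmap]
    simp

end Killer
section LocalStructure

theorem LR_eq_zero_of_trace_le {B Q : Type*} [CommRing B] [IsLocalRing B] [AddCommGroup Q]
    [Module B Q] (hp : Module.Projective B Q)
    (htr : LRtraceIdeal B Q ≤ IsLocalRing.maximalIdeal B) (x : Q) : x = 0 := by
  obtain ⟨d, hdx, hd1⟩ := LR_exists_killer hp x
  have hdunit : IsUnit d := by
    by_contra hd
    have hdm : d ∈ IsLocalRing.maximalIdeal B := hd
    have h1 : (1 : B) ∈ IsLocalRing.maximalIdeal B := by
      have : d - (d - 1) ∈ IsLocalRing.maximalIdeal B := Submodule.sub_mem _ hdm (htr hd1)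
      simpa using this
    exact (Ideal.ne_top_iff_one _).mp (Ideal.IsMaximal.ne_top inferInstance) h1
  have h0 : (↑hdunit.unit⁻¹ : B) • (d • x) = 0 := by rw [hdx, smul_zero]
  rwa [smul_smul, IsUnit.val_inv_mul, one_smul] at h0

theorem LR_local_structure {B Q : Type*} [CommRing B] [IsLocalRing B] [AddCommGroup Q]
    [Module B Q] (hp : Module.Projective B Q) (hrank : Module.rank B Q = 1) :
    ∃ (h : Q →ₗ[B] B) (u : Q), h u = 1 ∧ ∀ x : Q, x = h x • u := by
  classical
  -- the trace ideal is everything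
  have htr : LRtraceIdeal B Q = ⊤ := by
    by_contra htr
    have hle : LRtraceIdeal B Q ≤ IsLocalRing.maximalIdeal B :=
      IsLocalRing.le_maximalIdeal htr
    have : Subsingleton Q := ⟨fun a b => by
      rw [LR_eq_zero_of_trace_le hp hle a, LR_eq_zero_of_trace_le hp hle b]⟩
    rw [rank_subsingleton' B Q] at hrank
    exact zero_ne_one hrank
  -- find a functional taking a unit value
  have hunitval : ∃ (f : Q →ₗ[B] B) (x : Q), IsUnit (f x) := by
    by_contra hno
    push_neg at hno
    have : LRtraceIdeal B Q ≤ IsLocalRing.maximalIdeal B := by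
      apply Ideal.span_le.mpr
      rintro a ⟨f, x, rfl⟩
      exact hno f x
    rw [htr] at this
    exact (Ideal.ne_top_iff_one _).mp (Ideal.IsMaximal.ne_top inferInstance)
      (this Submodule.mem_top)
  obtain ⟨f, u, hu⟩ := hunitval
  set h : Q →ₗ[B] B := (↑hu.unit⁻¹ : B) • f with hh
  have hhu : h u = 1 := by
    simp [hh, IsUnit.val_inv_mul]
  -- every element of the kernel of `h` is torsion
  have htors : ∀ k : Q, h k = 0 → ∃ b : B, b ≠ 0 ∧ b • k = 0 := by
    intro k hk
    have hdep : ¬ LinearIndependent B ![u, k] := by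
      intro hli
      have := hli.cardinal_lift_le_rank
      rw [hrank, Cardinal.mk_fin] at this
      simp at this
    obtain ⟨g, hsum, i, hi⟩ := Fintype.not_linearIndependent_iff.mp hdep
    have hsum2 : g 0 • u + g 1 • k = 0 := by
      simpa [Fin.sum_univ_two] using hsum
    have hg0 : g 0 = 0 := by
      have := congrArg h hsum2
      simpa [map_add, map_smul, hhu, hk] using this
    refine ⟨g 1, ?_, ?_⟩
    · intro hg1
      fin_cases i <;> simp_all
    · have := hsum2
      rw [hg0, zero_smul, zero_add] at this
      exact this
  -- the kernel of `h` is a projective module with small trace ideal, hence zero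
  have hker : ∀ k : Q, h k = 0 → k = 0 := by
    intro k hk
    set K := LinearMap.ker h with hK
    have hmem : k ∈ K := hk
    -- K is a direct summand of Q
    have hr : ∀ x : Q, ((LinearMap.id : Q →ₗ[B] Q) - (LinearMap.toSpanSingleton B Q u).comp h) x ∈ K := by
      intro x
      simp [hK, LinearMap.mem_ker, LinearMap.sub_apply, LinearMap.toSpanSingleton_apply,
        map_sub, map_smul, hhu, smul_eq_mul]
    let r : Q →ₗ[B] K := LinearMap.codRestrict K ((LinearMap.id : Q →ₗ[B] Q) - (LinearMap.toSpanSingleton B Q u).comp h) hr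
    have hsplit : r.comp K.subtype = LinearMap.id := by
      ext ⟨y, hy⟩
      have : h y = 0 := hy
      simp [r, LinearMap.codRestrict, LinearMap.toSpanSingleton, this]
    have hpK : Module.Projective B K := Module.Projective.of_split K.subtype r hsplit
    have htrK : LRtraceIdeal B K ≤ IsLocalRing.maximalIdeal B := by
      apply Ideal.span_le.mpr
      rintro a ⟨f', ⟨y, hy⟩, rfl⟩
      intro hunit
      obtain ⟨b, hb, hbk⟩ := htors y hy
      have : b • f' ⟨y, hy⟩ = 0 := by
        rw [← map_smul]
        have : (b • (⟨y, hy⟩ : K)) = 0 := by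
          apply Subtype.ext
          simpa using hbk
        rw [this, map_zero]
      exact hb ((hunit.mul_left_eq_zero).mp this)
    have : (⟨k, hmem⟩ : K) = 0 := LR_eq_zero_of_trace_le hpK htrK _
    simpa using congrArg (K.subtype) this
  refine ⟨h, u, hhu, fun x => ?_⟩
  have := hker (x - h x • u) (by simp [map_sub, map_smul, hhu, smul_eq_mul])
  have := sub_eq_zero.mp this
  exact this
  
end LocalStructure
section Global

variable {A P : Type*} [CommRing A] [AddCommGroup P] [Module A P]

theorem LR_localized_projective (hproj : Module.Projective A P) (S : Submonoid A) :
    Module.Projective (Localization S) (LocalizedModule S P) := by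
  haveI := hproj
  have hbc : IsBaseChange (Localization S) (LocalizedModule.mkLinearMap S P) :=
    IsLocalizedModule.isBaseChange S (Localization S) _
  exact Module.Projective.of_equiv hbc.equiv

theorem LR_trace_eq_top (hproj : Module.Projective A P)
    (hrank : ∀ (p : Ideal A) (_ : p.IsPrime),
      Module.rank (Localization.AtPrime p) (LocalizedModule p.primeCompl P) = 1) :
    LRtraceIdeal A P = ⊤ := by
  by_contra htr
  obtain ⟨m, hm, hle⟩ := Ideal.exists_le_maximal _ htr
  haveI := hm.isPrime
  have hz : ∀ x : P, ∃ d : A, d • x = 0 ∧ d ∈ m.primeCompl := by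
    intro x
    obtain ⟨d, hdx, hd1⟩ := LR_exists_killer hproj x
    refine ⟨d, hdx, fun hdm => ?_⟩
    have h1 : (1 : A) ∈ m := by
      have := m.sub_mem hdm (hle hd1); simpa using this
    exact hm.ne_top (Ideal.eq_top_of_isUnit_mem _ h1 isUnit_one)
  have hsub : Subsingleton (LocalizedModule m.primeCompl P) := by
    constructor
    intro a b
    induction a using LocalizedModule.induction_on with | _ x s =>
    induction b using LocalizedModule.induction_on with | _ y t =>
    obtain ⟨dx, hdx, hdxm⟩ := hz x
    obtain ⟨dy, hdy, hdym⟩ := hz y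
    rw [LocalizedModule.mk_eq]
    refine ⟨⟨dx * dy, Submonoid.mul_mem _ hdxm hdym⟩, ?_⟩
    have e1 : (dx * dy) • ((t : A) • x) = 0 := by
      rw [smul_smul, show dx * dy * (t : A) = dy * (t : A) * dx by ring, mul_smul, hdx, smul_zero]
    have e2 : (dx * dy) • ((s : A) • y) = 0 := by
      rw [smul_smul, show dx * dy * (s : A) = dx * (s : A) * dy by ring, mul_smul, hdy, smul_zero]
    simp only [Submonoid.smul_def]
    rw [e1, e2]
  have := hrank m hm.isPrime
  rw [rank_subsingleton'] at this
  exact zero_ne_one this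

theorem LR_exists_dual_family (hproj : Module.Projective A P)
    (hrank : ∀ (p : Ideal A) (_ : p.IsPrime),
      Module.rank (Localization.AtPrime p) (LocalizedModule p.primeCompl P) = 1) :
    ∃ (n : ℕ) (g : Fin n → (P →ₗ[A] A)) (q : Fin n → P), (∑ j, (g j) (q j)) = 1 := by
  have h1 : (1 : A) ∈ LRtraceIdeal A P := by
    rw [LR_trace_eq_top hproj hrank]; trivial
  rw [LRtraceIdeal, Ideal.span, Submodule.mem_span_set'] at h1
  obtain ⟨n, c, v, hv⟩ := h1
  choose f p hfp using fun j => (v j).2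
  refine ⟨n, fun j => c j • f j, p, ?_⟩
  rw [← hv]
  refine Finset.sum_congr rfl fun j _ => ?_
  simp [hfp j, smul_eq_mul]

theorem LR_symm (hproj : Module.Projective A P)
    (hrank : ∀ (p : Ideal A) (_ : p.IsPrime),
      Module.rank (Localization.AtPrime p) (LocalizedModule p.primeCompl P) = 1)
    (g : P →ₗ[A] A) (p q : P) : g p • q = g q • p := by
  rw [← sub_eq_zero]
  set z : P := g p • q - g q • p with hz
  have key : ∀ (m : Ideal A), m.IsMaximal → ¬ (Ideal.torsionOf A P z ≤ m) := by
    intro m hm hle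
    haveI := hm.isPrime
    obtain ⟨h, u, hu1, hstr⟩ :=
      LR_local_structure (LR_localized_projective hproj m.primeCompl) (hrank m hm.isPrime)
    have hunits : ∀ x : m.primeCompl,
        IsUnit ((algebraMap A (Module.End A (Localization.AtPrime m))) x) :=
      IsLocalizedModule.map_units (Algebra.linearMap A (Localization.AtPrime m))
    set glin : LocalizedModule m.primeCompl P →ₗ[A] Localization.AtPrime m :=
      LocalizedModule.lift m.primeCompl
        ((Algebra.linearMap A (Localization.AtPrime m)).comp g) hunits with hglin
    have hglin_mk : ∀ x : P, glin (LocalizedModule.mkLinearMap m.primeCompl P x)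
        = algebraMap A (Localization.AtPrime m) (g x) :=
      fun x => LinearMap.congr_fun (LocalizedModule.lift_comp m.primeCompl _ hunits) x
    set gbar : LocalizedModule m.primeCompl P →ₗ[Localization.AtPrime m]
        Localization.AtPrime m :=
      LinearMap.extendScalarsOfIsLocalization m.primeCompl (Localization.AtPrime m) glin
      with hgbar
    have hgbar_mk : ∀ x : P, gbar (LocalizedModule.mkLinearMap m.primeCompl P x)
        = algebraMap A (Localization.AtPrime m) (g x) := hglin_mk
    set xb := LocalizedModule.mkLinearMap m.primeCompl P p with hxb
    set yb := LocalizedModule.mkLinearMap m.primeCompl P q with hyb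
    have e1 : algebraMap A (Localization.AtPrime m) (g p) = h xb * gbar u := by
      rw [← hgbar_mk p, ← hxb]
      conv_lhs => rw [hstr xb]
      rw [map_smul, smul_eq_mul]
    have e2 : algebraMap A (Localization.AtPrime m) (g q) = h yb * gbar u := by
      rw [← hgbar_mk q, ← hyb]
      conv_lhs => rw [hstr yb]
      rw [map_smul, smul_eq_mul]
    have himz : LocalizedModule.mkLinearMap m.primeCompl P z = 0 := by
      have e0 : LocalizedModule.mkLinearMap m.primeCompl P z
          = algebraMap A (Localization.AtPrime m) (g p) • yb
            - algebraMap A (Localization.AtPrime m) (g q) • xb := by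
        rw [hz, map_sub, map_smul, map_smul, algebraMap_smul, algebraMap_smul]
      rw [e0]
      conv_lhs => rw [hstr yb, hstr xb]
      rw [smul_smul, smul_smul, ← sub_smul, e1, e2,
        show (h xb * gbar u) * h yb - (h yb * gbar u) * h xb = 0 by ring, zero_smul]
    have hmk : LocalizedModule.mk z (1 : m.primeCompl)
        = LocalizedModule.mk 0 (1 : m.primeCompl) := by
      rw [show LocalizedModule.mk z (1 : m.primeCompl)
        = LocalizedModule.mkLinearMap m.primeCompl P z from rfl, himz]
      rw [show (0 : LocalizedModule m.primeCompl P)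
        = LocalizedModule.mkLinearMap m.primeCompl P 0 by rw [map_zero]]
      rfl
    rw [LocalizedModule.mk_eq] at hmk
    obtain ⟨w, hw⟩ := hmk
    simp only [Submonoid.smul_def, one_smul, smul_zero] at hw
    exact (w.2 : (w : A) ∈ m.primeCompl) (hle (by rwa [Ideal.mem_torsionOf_iff]))
  have htop : Ideal.torsionOf A P z = ⊤ := by
    by_contra hne
    obtain ⟨m, hm, hle⟩ := Ideal.exists_le_maximal _ hne
    exact key m hm hle
  have h1 : (1 : A) • z = 0 := by
    rw [← Ideal.mem_torsionOf_iff, htop]; trivial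
  simpa using h1

end Global
section Constructions
open TensorProduct

variable {R A L : Type*} [CommRing R] [CommRing A] [Algebra R A]
  [LieRing L] [LieAlgebra R L] [Module A L] {LR : LieRinehart R A L}
  {P : Type*} [AddCommGroup P] [Module A P] {τP : P → L → P}

theorem LRright_zero {N : Type*} [AddCommGroup N] [Module A N] {τ : N → L → N}
    (hτ : IsLRRightModule LR N τ) (x : L) : τ 0 x = 0 := by
  have h := hτ.add_m 0 0 x
  rw [add_zero] at h
  exact left_eq_add.mp h

theorem LRright_sub {N : Type*} [AddCommGroup N] [Module A N] {τ : N → L → N}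
    (hτ : IsLRRightModule LR N τ) (m n : N) (x : L) : τ (m - n) x = τ m x - τ n x := by
  have h := hτ.add_m (m - n) n x
  rw [sub_add_cancel] at h
  rw [h]; abel

theorem LRleft_sub {M : Type*} [AddCommGroup M] [Module A M] {σ : L → M → M}
    (hσ : IsLRLeftModule LR M σ) (x : L) (m n : M) : σ x (m - n) = σ x m - σ x n := by
  have h := hσ.add_m x (m - n) n
  rw [sub_add_cancel] at h
  rw [h]; abel

variable {M : Type*} [AddCommGroup M] [Module A M] {σ : L → M → M}

/-- The right action of `L` on `P ⊗[A] M`, as an additive map. -/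
noncomputable def LRten (hP : IsLRRightModule LR P τP) (hσ : IsLRLeftModule LR M σ) (x : L) :
    P ⊗[A] M →+ P ⊗[A] M :=
  TensorProduct.liftAddHom
    (AddMonoidHom.mk' (fun p => AddMonoidHom.mk'
      (fun m => τP p x ⊗ₜ[A] m - p ⊗ₜ[A] σ x m)
      (fun m n => by
        show τP p x ⊗ₜ[A] (m + n) - p ⊗ₜ[A] σ x (m + n)
          = (τP p x ⊗ₜ[A] m - p ⊗ₜ[A] σ x m) + (τP p x ⊗ₜ[A] n - p ⊗ₜ[A] σ x n)
        rw [hσ.add_m, tmul_add, tmul_add]; abel))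
      (fun p p' => by
        ext m
        show τP (p + p') x ⊗ₜ[A] m - (p + p') ⊗ₜ[A] σ x m = _
        rw [hP.add_m, add_tmul, add_tmul]
        show _ = (τP p x ⊗ₜ[A] m - p ⊗ₜ[A] σ x m) + (τP p' x ⊗ₜ[A] m - p' ⊗ₜ[A] σ x m)
        abel))
    (fun a p m => by
      show τP (a • p) x ⊗ₜ[A] m - (a • p) ⊗ₜ[A] σ x m
        = τP p x ⊗ₜ[A] (a • m) - p ⊗ₜ[A] σ x (a • m)
      rw [hP.smul_m, hσ.leibniz, tmul_add, sub_tmul, tmul_smul, tmul_smul, tmul_smul,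
        smul_tmul', smul_tmul', smul_tmul']
      abel)

theorem LRten_tmul (hP : IsLRRightModule LR P τP) (hσ : IsLRLeftModule LR M σ) (x : L)
    (p : P) (m : M) : LRten hP hσ x (p ⊗ₜ[A] m) = τP p x ⊗ₜ[A] m - p ⊗ₜ[A] σ x m := by
  simp [LRten, TensorProduct.liftAddHom_tmul]

theorem LRten_isRight (hP : IsLRRightModule LR P τP) (hσ : IsLRLeftModule LR M σ) :
    IsLRRightModule LR (P ⊗[A] M) (fun t x => LRten hP hσ x t) := by
  constructor
  · intro t t' x
    exact (LRten hP hσ x).map_add t t'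
  · intro t x y
    induction t using TensorProduct.induction_on with
    | zero => simp
    | tmul p m =>
      simp only [LRten_tmul, hP.add_x, hσ.add_x, add_tmul, tmul_add]
      abel
    | add t1 t2 ha hb =>
      simp only [map_add, smul_add, ha, hb]
      abel
  · intro t a x
    induction t using TensorProduct.induction_on with
    | zero => simp
    | tmul p m =>
      simp only [LRten_tmul, hP.smul_x, hσ.smul_x, sub_tmul, tmul_smul, smul_tmul',
        smul_sub]
      abel
    | add t1 t2 ha hb =>
      simp only [map_add, smul_add, ha, hb]
      abel
  · intro a t x
    induction t using TensorProduct.induction_on with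
    | zero => simp
    | tmul p m =>
      simp only [smul_tmul', LRten_tmul, hP.smul_m, hσ.leibniz, sub_tmul, add_tmul,
        tmul_add, tmul_smul, smul_sub, smul_add]
      abel
    | add t1 t2 ha hb =>
      simp only [map_add, smul_add, ha, hb]
      abel
  · intro t x y
    induction t using TensorProduct.induction_on with
    | zero => simp
    | tmul p m =>
      simp only [LRten_tmul, map_sub, hP.lie, hσ.lie, sub_tmul, tmul_sub]
      abel
    | add t1 t2 ha hb =>
      simp only [map_add, smul_add, ha, hb]
      abel

variable {N : Type*} [AddCommGroup N] [Module A N] {τN : N → L → N}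

/-- The left action of `L` on `Hom_A(P, N)`. -/
def LRhom (hP : IsLRRightModule LR P τP) (hτ : IsLRRightModule LR N τN) (x : L)
    (f : P →ₗ[A] N) : P →ₗ[A] N where
  toFun p := f (τP p x) - τN (f p) x
  map_add' p p' := by
    show f (τP (p + p') x) - τN (f (p + p')) x
      = (f (τP p x) - τN (f p) x) + (f (τP p' x) - τN (f p') x)
    rw [hP.add_m, map_add, map_add, hτ.add_m]
    abel
  map_smul' a p := by
    show f (τP (a • p) x) - τN (f (a • p)) x = a • (f (τP p x) - τN (f p) x)
    rw [hP.smul_m]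
    simp only [map_sub, map_smul]
    rw [hτ.smul_m, smul_sub]
    abel

theorem LRhom_apply (hP : IsLRRightModule LR P τP) (hτ : IsLRRightModule LR N τN) (x : L)
    (f : P →ₗ[A] N) (p : P) : LRhom hP hτ x f p = f (τP p x) - τN (f p) x := rfl

theorem LRhom_isLeft (hP : IsLRRightModule LR P τP) (hτ : IsLRRightModule LR N τN) :
    IsLRLeftModule LR (P →ₗ[A] N) (fun x f => LRhom hP hτ x f) := by
  constructor
  · intro x f g
    ext p
    simp only [LRhom_apply, LinearMap.add_apply]
    rw [hτ.add_m]
    abel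
  · intro x y f
    ext p
    simp only [LRhom_apply, LinearMap.add_apply]
    rw [hP.add_x, map_add, hτ.add_x]
    abel
  · intro a x f
    ext p
    simp only [LRhom_apply, LinearMap.smul_apply, hP.smul_x, hτ.smul_x, map_sub,
      map_smul, smul_sub]
    abel
  · intro x a f
    ext p
    simp only [LRhom_apply, LinearMap.add_apply, LinearMap.smul_apply]
    rw [hτ.smul_m, smul_sub]
    abel
  · intro x y f
    ext p
    simp only [LRhom_apply, LinearMap.sub_apply, hP.lie, hτ.lie, map_sub, LRright_sub hτ]
    abel

end Constructions
section UnitCounit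
open TensorProduct

variable {A : Type*} [CommRing A] {P : Type*} [AddCommGroup P] [Module A P]
variable {M : Type*} [AddCommGroup M] [Module A M]

/-- Contraction of a tensor against a linear functional. -/
noncomputable def LRcontr (g : P →ₗ[A] A) : P ⊗[A] M →ₗ[A] M :=
  TensorProduct.lift ((LinearMap.lsmul A M).comp g)

theorem LRcontr_tmul (g : P →ₗ[A] A) (p : P) (m : M) :
    LRcontr (M := M) g (p ⊗ₜ[A] m) = g p • m := by
  simp [LRcontr]

theorem LR_tmul_contr (hstar : ∀ (g : P →ₗ[A] A) (p q : P), g p • q = g q • p)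
    (g : P →ₗ[A] A) (p : P) (t : P ⊗[A] M) :
    p ⊗ₜ[A] (LRcontr (M := M) g t) = g p • t := by
  induction t using TensorProduct.induction_on with
  | zero => simp
  | tmul p' m =>
    rw [LRcontr_tmul, tmul_smul, smul_tmul', hstar g p' p, ← smul_tmul', ← tmul_smul,
      tmul_smul]
  | add t1 t2 ha hb =>
    rw [map_add, tmul_add, ha, hb, smul_add]

theorem LR_unit_bijective (hstar : ∀ (g : P →ₗ[A] A) (p q : P), g p • q = g q • p)
    {n : ℕ} (gf : Fin n → (P →ₗ[A] A)) (qf : Fin n → P)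
    (hfam : (∑ j, (gf j) (qf j)) = 1) :
    Function.Bijective ((TensorProduct.mk A P M).flip :
      M →ₗ[A] (P →ₗ[A] (P ⊗[A] M))) := by
  apply Function.bijective_iff_has_inverse.mpr
  refine ⟨fun f => ∑ j, LRcontr (M := M) (gf j) (f (qf j)), ?_, ?_⟩
  · intro m
    show (∑ j, LRcontr (M := M) (gf j) (((TensorProduct.mk A P M).flip m) (qf j))) = m
    have : ∀ j : Fin n, LRcontr (M := M) (gf j) (((TensorProduct.mk A P M).flip m) (qf j))
        = (gf j) (qf j) • m := by
      intro j
      rw [LinearMap.flip_apply, TensorProduct.mk_apply, LRcontr_tmul]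
    rw [Finset.sum_congr rfl (fun j _ => this j), ← Finset.sum_smul, hfam, one_smul]
  · intro f
    apply LinearMap.ext
    intro p
    rw [LinearMap.flip_apply, TensorProduct.mk_apply, tmul_sum]
    have : ∀ j : Fin n, p ⊗ₜ[A] (LRcontr (M := M) (gf j) (f (qf j)))
        = f ((gf j) (qf j) • p) := by
      intro j
      rw [LR_tmul_contr hstar, ← map_smul, hstar (gf j) p (qf j)]
    rw [Finset.sum_congr rfl (fun j _ => this j), ← map_sum]
    have : (∑ j, (gf j) (qf j) • p) = p := by
      rw [← Finset.sum_smul, hfam, one_smul]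
    rw [this]

theorem LR_smulRight_swap (hstar : ∀ (g : P →ₗ[A] A) (p q : P), g p • q = g q • p)
    {N : Type*} [AddCommGroup N] [Module A N]
    (g : P →ₗ[A] A) (p : P) (f : P →ₗ[A] N) : g.smulRight (f p) = g p • f := by
  apply LinearMap.ext
  intro p'
  rw [LinearMap.smulRight_apply, LinearMap.smul_apply, ← map_smul, hstar g p' p, map_smul]

theorem LR_counit_bijective (hstar : ∀ (g : P →ₗ[A] A) (p q : P), g p • q = g q • p)
    {n : ℕ} (gf : Fin n → (P →ₗ[A] A)) (qf : Fin n → P)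
    (hfam : (∑ j, (gf j) (qf j)) = 1)
    {N : Type*} [AddCommGroup N] [Module A N] :
    Function.Bijective
      (TensorProduct.lift ((LinearMap.id : (P →ₗ[A] N) →ₗ[A] (P →ₗ[A] N)).flip) :
        P ⊗[A] (P →ₗ[A] N) →ₗ[A] N) := by
  set ev : P ⊗[A] (P →ₗ[A] N) →ₗ[A] N :=
    TensorProduct.lift ((LinearMap.id : (P →ₗ[A] N) →ₗ[A] (P →ₗ[A] N)).flip) with hev
  have hev_tmul : ∀ (p : P) (f : P →ₗ[A] N), ev (p ⊗ₜ[A] f) = f p := by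
    intro p f
    rw [hev, TensorProduct.lift.tmul, LinearMap.flip_apply, LinearMap.id_apply]
  apply Function.bijective_iff_has_inverse.mpr
  refine ⟨fun nn => ∑ j, (qf j) ⊗ₜ[A] ((gf j).smulRight nn), ?_, ?_⟩
  · intro t
    show (∑ j, (qf j) ⊗ₜ[A] ((gf j).smulRight (ev t))) = t
    induction t using TensorProduct.induction_on with
    | zero => simp
    | tmul p f =>
      rw [hev_tmul]
      have : ∀ j : Fin n, (qf j) ⊗ₜ[A] ((gf j).smulRight (f p))
          = ((gf j) (qf j) • p) ⊗ₜ[A] f := by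
        intro j
        rw [LR_smulRight_swap hstar, tmul_smul, smul_tmul', hstar (gf j) p (qf j),
          ← smul_tmul']
      rw [Finset.sum_congr rfl (fun j _ => this j)]
      have h2 : (∑ j, ((gf j) (qf j) • p) ⊗ₜ[A] f) = (∑ j, (gf j) (qf j)) • (p ⊗ₜ[A] f) := by
        rw [Finset.sum_smul]
        refine Finset.sum_congr rfl fun j _ => ?_
        rw [smul_tmul']
      rw [h2, hfam, one_smul]
    | add t1 t2 ha hb =>
      rw [map_add]
      have : ∀ (a b : N), (∑ j, (qf j) ⊗ₜ[A] ((gf j).smulRight (a + b)))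
          = (∑ j, (qf j) ⊗ₜ[A] ((gf j).smulRight a))
            + (∑ j, (qf j) ⊗ₜ[A] ((gf j).smulRight b)) := by
        intro a b
        rw [← Finset.sum_add_distrib]
        refine Finset.sum_congr rfl fun j _ => ?_
        have : (gf j).smulRight (a + b) = (gf j).smulRight a + (gf j).smulRight b := by
          apply LinearMap.ext; intro p'; simp [smul_add]
        rw [this, tmul_add]
      rw [this, ha, hb]
  · intro nn
    show ev (∑ j, (qf j) ⊗ₜ[A] ((gf j).smulRight nn)) = nn
    have : ∀ j : Fin n, ev ((qf j) ⊗ₜ[A] ((gf j).smulRight nn)) = (gf j) (qf j) • nn := by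
      intro j
      rw [hev_tmul, LinearMap.smulRight_apply]
    rw [map_sum, Finset.sum_congr rfl (fun j _ => this j), ← Finset.sum_smul, hfam, one_smul]

end UnitCounit
/-- if `P` is a right `U(L)`-module which is projective of constant rank 1
as an `A`-module, then `P ⊗_A (−)` and `Hom_A(P, −)` are mutually inverse equivalences
between left and right `L`-modules (equivalently, left and right `U(L)`-modules):
`P ⊗_A M` carries the right action `(p ⊗ m)•x = p•x ⊗ m − p ⊗ x•m`, `Hom_A(P,N)`
carries the left action `(x•f)(p) = f(p•x) − f(p)•x`, and the unit `m ↦ (p ↦ p ⊗ m)`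
and counit `p ⊗ f ↦ f(p)` are equivariant bijections. -/
theorem side_switching_equivalence.{u} {R A L P : Type u} [CommRing R] [CommRing A]
    [Algebra R A] [LieRing L] [LieAlgebra R L] [Module A L]
    [AddCommGroup P] [Module A P]
    (LR : LieRinehart R A L) (τP : P → L → P) (hP : IsLRRightModule LR P τP)
    (hproj : Module.Projective A P)
    (hrank : ∀ (p : Ideal A) (_ : p.IsPrime),
      Module.rank (Localization.AtPrime p) (LocalizedModule p.primeCompl P) = 1) :
    -- `P ⊗_A (−)` sends left modules to right modules, and the unit is an
    -- equivariant bijection: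
    (∀ (M : Type u) (_ : AddCommGroup M), ∀ (_ : Module A M), ∀ (σ : L → M → M),
      IsLRLeftModule LR M σ →
      ∃ τ' : (P ⊗[A] M) → L → (P ⊗[A] M),
        IsLRRightModule LR (P ⊗[A] M) τ' ∧
        (∀ (p : P) (m : M) (x : L), τ' (p ⊗ₜ m) x = (τP p x) ⊗ₜ m - p ⊗ₜ (σ x m)) ∧
        ∃ σH : L → (P →ₗ[A] (P ⊗[A] M)) → (P →ₗ[A] (P ⊗[A] M)),
          IsLRLeftModule LR (P →ₗ[A] (P ⊗[A] M)) σH ∧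
          (∀ (x : L) (f : P →ₗ[A] (P ⊗[A] M)) (p : P),
            (σH x f) p = f (τP p x) - τ' (f p) x) ∧
          Function.Bijective ((TensorProduct.mk A P M).flip :
            M →ₗ[A] (P →ₗ[A] (P ⊗[A] M))) ∧
          (∀ (x : L) (m : M),
            (TensorProduct.mk A P M).flip (σ x m) = σH x ((TensorProduct.mk A P M).flip m))) ∧
    -- `Hom_A(P, −)` sends right modules to left modules, and the counit is an
    -- equivariant bijection:
    (∀ (N : Type u) (_ : AddCommGroup N), ∀ (_ : Module A N), ∀ (τ : N → L → N),
      IsLRRightModule LR N τ →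
      ∃ σH : L → (P →ₗ[A] N) → (P →ₗ[A] N),
        IsLRLeftModule LR (P →ₗ[A] N) σH ∧
        (∀ (x : L) (f : P →ₗ[A] N) (p : P), (σH x f) p = f (τP p x) - τ (f p) x) ∧
        ∃ τ' : (P ⊗[A] (P →ₗ[A] N)) → L → (P ⊗[A] (P →ₗ[A] N)),
          IsLRRightModule LR (P ⊗[A] (P →ₗ[A] N)) τ' ∧
          (∀ (p : P) (f : P →ₗ[A] N) (x : L),
            τ' (p ⊗ₜ f) x = (τP p x) ⊗ₜ f - p ⊗ₜ (σH x f)) ∧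
          Function.Bijective
            (TensorProduct.lift ((LinearMap.id : (P →ₗ[A] N) →ₗ[A] (P →ₗ[A] N)).flip) :
              P ⊗[A] (P →ₗ[A] N) →ₗ[A] N) ∧
          (∀ (t : P ⊗[A] (P →ₗ[A] N)) (x : L),
            TensorProduct.lift ((LinearMap.id : (P →ₗ[A] N) →ₗ[A] (P →ₗ[A] N)).flip)
              (τ' t x)
            = τ (TensorProduct.lift
                ((LinearMap.id : (P →ₗ[A] N) →ₗ[A] (P →ₗ[A] N)).flip) t) x)) := by
  obtain ⟨n, gf, qf, hfam⟩ := LR_exists_dual_family hproj hrank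
  have hstar : ∀ (g : P →ₗ[A] A) (p q : P), g p • q = g q • p := LR_symm hproj hrank
  have hev_tmul : ∀ {N : Type u} [AddCommGroup N] [Module A N] (p : P) (f : P →ₗ[A] N),
      TensorProduct.lift ((LinearMap.id : (P →ₗ[A] N) →ₗ[A] (P →ₗ[A] N)).flip)
        (p ⊗ₜ[A] f) = f p := by
    intro N _ _ p f
    rw [TensorProduct.lift.tmul, LinearMap.flip_apply, LinearMap.id_apply]
  constructor
  · -- tensor direction
    intro M _ _ σ hσ
    refine ⟨fun t x => LRten hP hσ x t, LRten_isRight hP hσ,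
      fun p m x => LRten_tmul hP hσ x p m, ?_⟩
    refine ⟨fun x f => LRhom hP (LRten_isRight hP hσ) x f,
      LRhom_isLeft hP (LRten_isRight hP hσ), fun x f p => rfl,
      LR_unit_bijective hstar gf qf hfam, ?_⟩
    intro x m
    apply LinearMap.ext
    intro p
    rw [LinearMap.flip_apply, TensorProduct.mk_apply, LRhom_apply, LinearMap.flip_apply,
      TensorProduct.mk_apply, LinearMap.flip_apply, TensorProduct.mk_apply]
    show p ⊗ₜ[A] (σ x m) = τP p x ⊗ₜ[A] m - LRten hP hσ x (p ⊗ₜ[A] m)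
    rw [LRten_tmul]
    abel
  · -- hom direction
    intro N _ _ τ hτ
    refine ⟨fun x f => LRhom hP hτ x f, LRhom_isLeft hP hτ, fun x f p => rfl, ?_⟩
    refine ⟨fun t x => LRten hP (LRhom_isLeft hP hτ) x t,
      LRten_isRight hP (LRhom_isLeft hP hτ),
      fun p f x => LRten_tmul hP (LRhom_isLeft hP hτ) x p f,
      LR_counit_bijective hstar gf qf hfam, ?_⟩
    intro t x
    induction t using TensorProduct.induction_on with
    | zero => simp only [map_zero, LRright_zero hτ]
    | tmul p f =>
      show TensorProduct.lift _ (LRten hP (LRhom_isLeft hP hτ) x (p ⊗ₜ[A] f)) = _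
      rw [LRten_tmul, map_sub, hev_tmul, hev_tmul, LRhom_apply, hev_tmul]
      abel
    | add t1 t2 ha hb =>
      show TensorProduct.lift _ (LRten hP (LRhom_isLeft hP hτ) x (t1 + t2)) = _
      rw [map_add, map_add, ha, hb, map_add, hτ.add_m]
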